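/- arXiv:2310.04015 — 2 statements merged into one kernel-verified Lean document; each statement's English description precedes it below -/
import Mathlib

section
/- Let 0 < ψ_p ≤ ψ_d < 1, 0 ≤ ρ ≤ 1, σ > 0. Define Δ(s) = (1 − ψ_d)^{-1} / ((1 + s²)(1 − ψ_d + ψ_p)^{-1} − ρ s²) where s = r_s/σ ≥ 0 is SNR (assuming the denominator is positive). Then Δ is decreasing in s, and lim_{s→0} Δ(s) = (1 − ψ_d + ψ_p)/(1 − ψ_d) > 1. -/
/-! With `u = (1 - ψd + ψp)⁻¹ ≥ 1 ≥ ρ`, the denominator of `Δ` is `u + (u - ρ) s²`: it is at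
least `u > 0` and nondecreasing in `s ≥ 0`. So `Δ` is continuous and antitone on `s ≥ 0`, and its
limit at `0` is `Δ 0 = (1 - ψd + ψp) / (1 - ψd)`, which exceeds `1` because `ψp > 0`. -/

open Filter Topology

lemma one_add_sq_mul_sub_mul_sq_eq (u ρ s : ℝ) :
    (1 + s ^ 2) * u - ρ * s ^ 2 = u + (u - ρ) * s ^ 2 := by
  ring

section
variable {u ρ : ℝ}

lemma monotoneOn_one_add_sq_mul_sub_mul_sq (h : ρ ≤ u) :
    MonotoneOn (fun s : ℝ => (1 + s ^ 2) * u - ρ * s ^ 2) (Set.Ici 0) := by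
  intro a ha b _ hab
  simp only [one_add_sq_mul_sub_mul_sq_eq]
  gcongr

lemma one_add_sq_mul_sub_mul_sq_pos (hu : 0 < u) (h : ρ ≤ u) (s : ℝ) :
    0 < (1 + s ^ 2) * u - ρ * s ^ 2 := by
  rw [one_add_sq_mul_sub_mul_sq_eq]
  have : 0 ≤ u - ρ := by linarith
  positivity

end

theorem stmt6_general (ψd ψp ρ : ℝ)
    (hψp0 : 0 < ψp) (hψp : ψp ≤ ψd) (hψd1 : ψd < 1)
    (hρ1 : ρ ≤ 1) :
    let Δ : ℝ → ℝ := fun s =>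
      (1 - ψd)⁻¹ / ((1 + s ^ 2) * (1 - ψd + ψp)⁻¹ - ρ * s ^ 2)
    AntitoneOn Δ (Set.Ici 0) ∧
    Tendsto Δ (𝓝[>] 0) (𝓝 ((1 - ψd + ψp) / (1 - ψd))) ∧
    1 < (1 - ψd + ψp) / (1 - ψd) := by
  intro Δ
  have hd : 0 < 1 - ψd := by linarith
  have hc : 0 < 1 - ψd + ψp := by linarith
  have hρu : ρ ≤ (1 - ψd + ψp)⁻¹ := hρ1.trans ((one_le_inv₀ hc).2 (by linarith))
  have hpos := one_add_sq_mul_sub_mul_sq_pos (inv_pos.2 hc) hρu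
  refine ⟨fun a ha b hb hab => ?_, ?_, (one_lt_div hd).2 (by linarith)⟩
  · exact div_le_div_of_nonneg_left (inv_pos.2 hd).le (hpos a)
      (monotoneOn_one_add_sq_mul_sub_mul_sq hρu ha hb hab)
  · have hΔ0 : Δ 0 = (1 - ψd + ψp) / (1 - ψd) := by
      simp [Δ, div_inv_eq_mul, inv_mul_eq_div]
    rw [← hΔ0]
    exact tendsto_nhdsWithin_of_tendsto_nhds
      ((continuous_const.div (by fun_prop) fun s => (hpos s).ne').tendsto 0)

/-- Case 1 gain: `Δ(s) = (1−ψ_d)⁻¹ / ((1+s²)(1−ψ_d+ψ_p)⁻¹ − ρ s²)` is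
decreasing in the SNR `s ≥ 0`, and `Δ(s) → (1−ψ_d+ψ_p)/(1−ψ_d) > 1` as `s → 0`. -/
theorem stmt6 (ψd ψp ρ : ℝ)
    (hψp0 : 0 < ψp) (hψp : ψp ≤ ψd) (hψd1 : ψd < 1)
    (hρ0 : 0 ≤ ρ) (hρ1 : ρ ≤ 1)
    (hden : ∀ s : ℝ, 0 ≤ s → 0 < (1 + s ^ 2) * (1 - ψd + ψp)⁻¹ - ρ * s ^ 2) :
    let Δ : ℝ → ℝ := fun s =>
      (1 - ψd)⁻¹ / ((1 + s ^ 2) * (1 - ψd + ψp)⁻¹ - ρ * s ^ 2)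
    AntitoneOn Δ (Set.Ici 0) ∧
    Tendsto Δ (𝓝[>] 0) (𝓝 ((1 - ψd + ψp) / (1 - ψd))) ∧
    1 < (1 - ψd + ψp) / (1 - ψd) :=
  stmt6_general ψd ψp ρ hψp0 hψp hψd1 hρ1
end

section
/- Let ψ_d > 1 and ψ_d − ψ_p ≤ 1 with ψ_p > 0, σ > 0, and suppose SNR² = (r_s/σ)² ≤ (1 + (ψ_d − 1)^{-1} − (1 − ψ_d + ψ_p)^{-1}) / ((1 − ψ_d + ψ_p)^{-1} + ψ_d^{-1} − 1). Then (ψ_d/(ψ_d−1) + (1 − 1/ψ_d)·SNR²) / ((1 + SNR²)/(1 − ψ_d + ψ_p)) ≥ 1. -/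
/-!
Write `s = SNR²`, `q = 1 - ψ_d + ψ_p`, `a = ψ_d/(ψ_d - 1) = 1 + (ψ_d - 1)⁻¹` and
`b = 1 - 1/ψ_d`, so that `0 < b < a`. The gain is `q (a + b s) / (1 + s)`, and it is at least
`1` iff `s (1 - q b) ≤ q a - 1`. When `q b < 1` this is the SNR condition
`s ≤ (a - q⁻¹) / (q⁻¹ - b)` multiplied by `q⁻¹ - b > 0`; otherwise the left side is `≤ 0`
while `q a - 1 > q b - 1 ≥ 0`. The SNR condition also excludes `q = 0`, where its right-hand
side is `-a/b < 0`.
-/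

section Gain

variable {a b q s : ℝ}

theorem pos_of_le_div_inv_sub (hq : 0 ≤ q) (ha : 0 < a) (hb : 0 < b) (hs : 0 ≤ s)
    (h : s ≤ (a - q⁻¹) / (q⁻¹ - b)) : 0 < q := by
  refine hq.lt_of_ne fun hq0 => ?_
  rw [← hq0, inv_zero, sub_zero, zero_sub, div_neg] at h
  linarith [div_pos ha hb]

theorem one_add_le_mul_of_le_div_inv_sub (hq : 0 < q) (hba : b < a) (hs : 0 ≤ s)
    (h : s ≤ (a - q⁻¹) / (q⁻¹ - b)) : 1 + s ≤ q * (a + b * s) := by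
  have hqa : q * q⁻¹ = 1 := mul_inv_cancel₀ hq.ne'
  rcases lt_or_ge b q⁻¹ with hbq | hqb
  · have h' : s * (q⁻¹ - b) ≤ a - q⁻¹ := (le_div_iff₀ (sub_pos.mpr hbq)).mp h
    nlinarith [mul_le_mul_of_nonneg_left h' hq.le]
  · have hqb' : 1 ≤ q * b := hqa ▸ mul_le_mul_of_nonneg_left hqb hq.le
    nlinarith [mul_lt_mul_of_pos_left hba hq]

theorem one_le_gain_of_le_div_inv_sub (hq : 0 ≤ q) (hb : 0 < b) (hba : b < a) (hs : 0 ≤ s)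
    (h : s ≤ (a - q⁻¹) / (q⁻¹ - b)) : 1 ≤ (a + b * s) / ((1 + s) / q) := by
  have hq' := pos_of_le_div_inv_sub hq (hb.trans hba) hb hs h
  rw [le_div_iff₀ (by positivity), one_mul, div_le_iff₀ hq', mul_comm]
  exact one_add_le_mul_of_le_div_inv_sub hq' hba hs h

end Gain

theorem stmt8_general (ψd ψp σ rs : ℝ)
    (hψd : 1 < ψd) (hψ : ψd - ψp ≤ 1)
    (hsnr : (rs / σ) ^ 2 ≤
      (1 + (ψd - 1)⁻¹ - (1 - ψd + ψp)⁻¹) / ((1 - ψd + ψp)⁻¹ + ψd⁻¹ - 1)) :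
    1 ≤ (ψd / (ψd - 1) + (1 - 1 / ψd) * (rs / σ) ^ 2)
          / ((1 + (rs / σ) ^ 2) / (1 - ψd + ψp)) := by
  have hψd1 : 0 < ψd - 1 := sub_pos.mpr hψd
  have ha : ψd / (ψd - 1) = 1 + (ψd - 1)⁻¹ := by field_simp; ring
  have hb : 0 < 1 - 1 / ψd := by rw [sub_pos, div_lt_one (by linarith)]; exact hψd
  have hba : 1 - 1 / ψd < ψd / (ψd - 1) :=
    (sub_lt_self 1 (by positivity)).trans ((one_lt_div hψd1).mpr (sub_lt_self ψd one_pos))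
  refine one_le_gain_of_le_div_inv_sub (by linarith) hb hba (sq_nonneg _) ?_
  rw [ha, one_div]
  convert hsnr using 2
  ring

/-- Key inequality in Theorem 5: under the SNR condition (13), the limiting
gain `(ψ_d/(ψ_d−1) + (1 − 1/ψ_d)·SNR²) / ((1 + SNR²)/(1 − ψ_d + ψ_p))` is at least 1. -/
theorem stmt8 (ψd ψp σ rs : ℝ)
    (hψd : 1 < ψd) (hψ : ψd - ψp ≤ 1) (hψp : 0 < ψp) (hσ : 0 < σ) (hrs : 0 ≤ rs)
    (hsnr : (rs / σ) ^ 2 ≤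
      (1 + (ψd - 1)⁻¹ - (1 - ψd + ψp)⁻¹) / ((1 - ψd + ψp)⁻¹ + ψd⁻¹ - 1)) :
    1 ≤ (ψd / (ψd - 1) + (1 - 1 / ψd) * (rs / σ) ^ 2)
          / ((1 + (rs / σ) ^ 2) / (1 - ψd + ψp)) :=
  stmt8_general ψd ψp σ rs hψd hψ hsnr
end
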